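/- arXiv:2502.17671 — 5 statements merged into one kernel-verified Lean document; each statement's English description precedes it below -/
import Mathlib

section
/- For all real numbers x and ε, and any threshold λ ≥ 0, the hard-thresholding operator satisfies |thresh_λ(x + ε) − x| ≤ 3(min{|x|, λ} + |thresh_{λ/2}(ε)|). -/
/-- Hard-thresholding operator: `thresh lam z = z` if `|z| > lam`, else `0`. -/
noncomputable def thresh (lam z : ℝ) : ℝ := if |z| > lam then z else 0

theorem thresh_error_bound (x ε lam : ℝ) (hlam : 0 ≤ lam) :
    |thresh lam (x + ε) - x| ≤ 3 * (min |x| lam + |thresh (lam / 2) ε|) := by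
  have h1 : |x| - |ε| ≤ |x + ε| := by
    have := abs_add_le (x + ε) (-ε); simp at this; linarith
  have h2 : |x + ε| - |ε| ≤ |x| := by
    have := abs_add_le x ε; linarith
  have h3 : (0:ℝ) ≤ |ε| := abs_nonneg ε
  have h4 : (0:ℝ) ≤ |x| := abs_nonneg x
  unfold thresh
  rcases min_cases |x| lam with ⟨hm, _⟩ | ⟨hm, _⟩ <;> rw [hm] <;>
    split_ifs with ha hb hb <;> (try push_neg at *) <;>
    simp only [add_sub_cancel_left, zero_sub, abs_neg, abs_zero] <;> nlinarith
end

section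
/- Let σ > 0, 0 < ᾱ < 1/5, and y ∈ ℝ^m with ‖y‖² < −σ² ln(5ᾱ). If B ⊆ ℝ^m is a measurable set whose measure under the centered Gaussian N(0, σ²I) equals ᾱ, then the measure of B under the Gaussian N(y, σ²I) is strictly less than 1/2. -/
open Real MeasureTheory

/-- Gaussian measure (as a real number) of a set `B ⊆ ℝ^m`, centered at `y` with
variance `σ²` per coordinate. -/
noncomputable def gaussMeasure (m : ℕ) (y : EuclideanSpace ℝ (Fin m)) (σ : ℝ)
    (B : Set (EuclideanSpace ℝ (Fin m))) : ℝ :=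
  (2 * Real.pi * σ ^ 2) ^ (-(m : ℝ) / 2) *
    ∫ z in B, Real.exp (-‖z - y‖ ^ 2 / (2 * σ ^ 2))

lemma my_integrable_rexp {V : Type*} [NormedAddCommGroup V] [InnerProductSpace ℝ V]
    [FiniteDimensional ℝ V] [MeasurableSpace V] [BorelSpace V] {b : ℝ} (hb : 0 < b) :
    Integrable (fun v : V ↦ rexp (-b * ‖v‖ ^ 2)) := by
  have h := (GaussianFourier.integrable_cexp_neg_mul_sq_norm_add (V := V) (b := (b : ℂ))
    (by simpa using hb) 0 0).norm
  simpa [Complex.norm_exp, ← Complex.ofReal_pow] using h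

lemma my_rexp_rpow (a r : ℝ) : (rexp a) ^ r = rexp (a * r) := by
  rw [Real.rpow_def_of_pos (Real.exp_pos a), Real.log_exp]

lemma my_int_gauss {m : ℕ} (w : EuclideanSpace ℝ (Fin m)) {b : ℝ} (hb : 0 < b) :
    ∫ z : EuclideanSpace ℝ (Fin m), rexp (-b * ‖z - w‖ ^ 2) = (π / b) ^ ((m : ℝ) / 2) := by
  rw [integral_sub_right_eq_self (μ := volume)
    (fun z : EuclideanSpace ℝ (Fin m) ↦ rexp (-b * ‖z‖ ^ 2)) w]
  rw [GaussianFourier.integral_rexp_neg_mul_sq_norm hb]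
  simp [finrank_euclideanSpace_fin]

lemma my_integrable_gauss {m : ℕ} (w : EuclideanSpace ℝ (Fin m)) {b : ℝ} (hb : 0 < b) :
    Integrable (fun z : EuclideanSpace ℝ (Fin m) ↦ rexp (-b * ‖z - w‖ ^ 2)) :=
  (my_integrable_rexp hb).comp_sub_right w

theorem gaussian_shift_small_measure (m : ℕ) (σ ᾱ : ℝ) (y : EuclideanSpace ℝ (Fin m))
    (hσ : 0 < σ) (hᾱ : 0 < ᾱ) (hᾱ' : ᾱ < 1 / 5)
    (hy : ‖y‖ ^ 2 < -σ ^ 2 * Real.log (5 * ᾱ))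
    (B : Set (EuclideanSpace ℝ (Fin m))) (hB : MeasurableSet B)
    (hBα : gaussMeasure m 0 σ B = ᾱ) :
    gaussMeasure m y σ B < 1 / 2 := by
  have hσ0 : σ ≠ 0 := ne_of_gt hσ
  have hb : (0:ℝ) < (2 * σ ^ 2)⁻¹ := by positivity
  set C : ℝ := (2 * π * σ ^ 2) ^ (-(m : ℝ) / 2) with hCdef
  have hCpos : 0 < C := Real.rpow_pos_of_pos (by positivity) _
  have hCinv : C⁻¹ = (2 * π * σ ^ 2) ^ ((m : ℝ) / 2) := by
    rw [hCdef, ← Real.rpow_neg (by positivity)]; ring_nf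
  set f : EuclideanSpace ℝ (Fin m) → ℝ := fun z ↦ rexp (-‖z‖ ^ 2 / (4 * σ ^ 2)) with hfdef
  set g : EuclideanSpace ℝ (Fin m) → ℝ :=
    fun z ↦ rexp (-‖z - y‖ ^ 2 / (2 * σ ^ 2) + ‖z‖ ^ 2 / (4 * σ ^ 2)) with hgdef
  have hfg : ∀ z, rexp (-‖z - y‖ ^ 2 / (2 * σ ^ 2)) = f z * g z := by
    intro z
    rw [hfdef, hgdef, ← Real.exp_add]
    congr 1; ring
  have hf2 : ∀ z, f z ^ (2:ℝ) = rexp (-(2 * σ ^ 2)⁻¹ * ‖z‖ ^ 2) := by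
    intro z; rw [hfdef, my_rexp_rpow]; congr 1; field_simp; ring
  have hg2 : ∀ z, g z ^ (2:ℝ)
      = rexp (‖y‖ ^ 2 / σ ^ 2) * rexp (-(2 * σ ^ 2)⁻¹ * ‖z - (y + y)‖ ^ 2) := by
    intro z
    rw [hgdef, my_rexp_rpow, ← Real.exp_add]
    congr 1
    have e1 : ‖z - y‖ ^ 2 = ‖z‖ ^ 2 - 2 * inner ℝ z y + ‖y‖ ^ 2 := norm_sub_sq_real z y
    have e2 : ‖z - (y + y)‖ ^ 2 = ‖z‖ ^ 2 - 2 * inner ℝ z (y + y) + ‖y + y‖ ^ 2 :=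
      norm_sub_sq_real z (y + y)
    have e3 : (inner ℝ z (y + y) : ℝ) = inner ℝ z y + inner ℝ z y := inner_add_right z y y
    have e4 : ‖y + y‖ ^ 2 = ‖y‖ ^ 2 + 2 * inner ℝ y y + ‖y‖ ^ 2 := norm_add_sq_real y y
    have e5 : (inner ℝ y y : ℝ) = ‖y‖ ^ 2 := real_inner_self_eq_norm_sq y
    rw [e1, e2, e3, e4, e5]
    field_simp
    ring
  -- integrability
  have hIf2 : Integrable (fun z ↦ f z ^ (2:ℝ)) :=
    (my_integrable_rexp hb).congr (ae_of_all _ fun z ↦ (hf2 z).symm)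
  have hIg2 : Integrable (fun z ↦ g z ^ (2:ℝ)) :=
    ((my_integrable_gauss (y + y) hb).const_mul _).congr (ae_of_all _ fun z ↦ (hg2 z).symm)
  have hmf : AEStronglyMeasurable f (volume.restrict B) := by
    apply Continuous.aestronglyMeasurable; rw [hfdef]; fun_prop
  have hmg : AEStronglyMeasurable g (volume.restrict B) := by
    apply Continuous.aestronglyMeasurable; rw [hgdef]; fun_prop
  have hMf : MemLp f (ENNReal.ofReal 2) (volume.restrict B) := by
    rw [show ENNReal.ofReal 2 = 2 by norm_num]
    refine (memLp_two_iff_integrable_sq hmf).2 ?_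
    refine (hIf2.restrict (s := B)).congr (ae_of_all _ fun z ↦ ?_)
    show f z ^ (2:ℝ) = f z ^ (2:ℕ)
    rw [show (2:ℝ) = ((2:ℕ):ℝ) by norm_num, Real.rpow_natCast]
  have hMg : MemLp g (ENNReal.ofReal 2) (volume.restrict B) := by
    rw [show ENNReal.ofReal 2 = 2 by norm_num]
    refine (memLp_two_iff_integrable_sq hmg).2 ?_
    refine (hIg2.restrict (s := B)).congr (ae_of_all _ fun z ↦ ?_)
    show g z ^ (2:ℝ) = g z ^ (2:ℕ)
    rw [show (2:ℝ) = ((2:ℕ):ℝ) by norm_num, Real.rpow_natCast]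
  have hpq : Real.HolderConjugate 2 2 := ⟨by norm_num, by norm_num, by norm_num⟩
  have hHolder : ∫ z in B, f z * g z
      ≤ (∫ z in B, f z ^ (2:ℝ)) ^ ((1:ℝ)/2) * (∫ z in B, g z ^ (2:ℝ)) ^ ((1:ℝ)/2) :=
    integral_mul_le_Lp_mul_Lq_of_nonneg hpq (ae_of_all _ fun z ↦ (Real.exp_pos _).le)
      (ae_of_all _ fun z ↦ (Real.exp_pos _).le) hMf hMg
  -- evaluate ∫_B f²
  have h1 : ∫ z in B, f z ^ (2:ℝ) = ᾱ / C := by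
    have hB0 : C * ∫ z in B, rexp (-‖z - (0 : EuclideanSpace ℝ (Fin m))‖ ^ 2 / (2 * σ ^ 2)) = ᾱ := hBα
    have : ∫ z in B, f z ^ (2:ℝ)
        = ∫ z in B, rexp (-‖z - (0 : EuclideanSpace ℝ (Fin m))‖ ^ 2 / (2 * σ ^ 2)) := by
      refine integral_congr_ae (ae_of_all _ fun z ↦ ?_)
      show f z ^ (2:ℝ) = rexp (-‖z - (0 : EuclideanSpace ℝ (Fin m))‖ ^ 2 / (2 * σ ^ 2))
      rw [hf2, sub_zero]; congr 1; field_simp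
    rw [this, eq_div_iff hCpos.ne', mul_comm]
    exact hB0
  -- bound ∫_B g²
  have h2 : ∫ z in B, g z ^ (2:ℝ) ≤ rexp (‖y‖ ^ 2 / σ ^ 2) / C := by
    have step1 : ∫ z in B, g z ^ (2:ℝ) ≤ ∫ z, g z ^ (2:ℝ) :=
      setIntegral_le_integral hIg2 (ae_of_all _ fun z ↦ by
        show (0:ℝ) ≤ g z ^ (2:ℝ)
        rw [hg2]; positivity)
    have step2 : ∫ z, g z ^ (2:ℝ) = rexp (‖y‖ ^ 2 / σ ^ 2) / C := by
      rw [integral_congr_ae (ae_of_all _ hg2), MeasureTheory.integral_const_mul,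
        my_int_gauss _ hb]
      rw [show π / (2 * σ ^ 2)⁻¹ = 2 * π * σ ^ 2 by field_simp, ← hCinv]
      exact (div_eq_mul_inv _ _).symm
    linarith
  -- main bound
  have hE : 0 ≤ rexp (‖y‖ ^ 2 / σ ^ 2) / C := by positivity
  have hbound : gaussMeasure m y σ B ≤ ᾱ ^ ((1:ℝ)/2) * rexp (‖y‖ ^ 2 / (2 * σ ^ 2)) := by
    have e0 : gaussMeasure m y σ B = C * ∫ z in B, f z * g z := by
      unfold gaussMeasure
      rw [← hCdef]
      congr 1
      exact integral_congr_ae (ae_of_all _ fun z ↦ hfg z)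
    rw [e0]
    have step : C * ∫ z in B, f z * g z
        ≤ C * ((ᾱ / C) ^ ((1:ℝ)/2) * (rexp (‖y‖ ^ 2 / σ ^ 2) / C) ^ ((1:ℝ)/2)) := by
      refine mul_le_mul_of_nonneg_left ?_ hCpos.le
      refine hHolder.trans ?_
      rw [h1]
      refine mul_le_mul_of_nonneg_left ?_ (by positivity)
      exact Real.rpow_le_rpow (integral_nonneg fun z ↦ Real.rpow_nonneg (Real.exp_pos _).le _)
        h2 (by norm_num)
    refine step.trans_eq ?_
    have hCsq : C ^ ((1:ℝ)/2) * C ^ ((1:ℝ)/2) = C := by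
      rw [← Real.rpow_add hCpos]; norm_num
    have hexp : rexp (‖y‖ ^ 2 / σ ^ 2 * (1/2)) = rexp (‖y‖ ^ 2 / (2 * σ ^ 2)) := by
      congr 1; ring
    rw [Real.div_rpow hᾱ.le hCpos.le, Real.div_rpow (Real.exp_pos _).le hCpos.le,
      my_rexp_rpow, div_mul_div_comm, hCsq, mul_comm C, div_mul_cancel₀ _ hCpos.ne', hexp]
  -- strict inequality
  have h5α : (0:ℝ) < 5 * ᾱ := by positivity
  have hlt : rexp (‖y‖ ^ 2 / (2 * σ ^ 2)) < (5 * ᾱ) ^ (-(1:ℝ)/2) := by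
    rw [Real.rpow_def_of_pos h5α]
    apply Real.exp_lt_exp.2
    rw [div_lt_iff₀ (by positivity : (0:ℝ) < 2 * σ ^ 2)]
    nlinarith [hy]
  have final : ᾱ ^ ((1:ℝ)/2) * (5 * ᾱ) ^ (-(1:ℝ)/2) = (5:ℝ) ^ (-(1:ℝ)/2) := by
    rw [Real.mul_rpow (by norm_num) hᾱ.le, ← mul_assoc, mul_comm (ᾱ ^ ((1:ℝ)/2)),
      mul_assoc, ← Real.rpow_add hᾱ]
    norm_num
  have h5 : ((5:ℝ)) ^ (-(1:ℝ)/2) < 1 / 2 := by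
    rw [show (-(1:ℝ)/2) = -(1/2) by norm_num, Real.rpow_neg (by norm_num),
      ← Real.sqrt_eq_rpow]
    rw [show (1:ℝ)/2 = (2:ℝ)⁻¹ by norm_num]
    refine inv_strictAnti₀ (by norm_num) ?_
    have : Real.sqrt 4 < Real.sqrt 5 := Real.sqrt_lt_sqrt (by norm_num) (by norm_num)
    rwa [show (4:ℝ) = 2 ^ 2 by norm_num, Real.sqrt_sq (by norm_num)] at this
  calc gaussMeasure m y σ B ≤ ᾱ ^ ((1:ℝ)/2) * rexp (‖y‖ ^ 2 / (2 * σ ^ 2)) := hbound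
    _ < ᾱ ^ ((1:ℝ)/2) * (5 * ᾱ) ^ (-(1:ℝ)/2) := by
        exact mul_lt_mul_of_pos_left hlt (Real.rpow_pos_of_pos hᾱ _)
    _ = (5:ℝ) ^ (-(1:ℝ)/2) := final
    _ < 1 / 2 := h5
end

section
/- Let ᾱ, β̄ ∈ (0, 1) with β̄ ≥ 1/2, σ > 0, y ∈ ℝ^m, and suppose the KL-type inequality ‖y‖²/(2σ²) ≥ −β̄ ln(ᾱ/β̄) − (1 − β̄) ln((1 − ᾱ)/(1 − β̄)) holds. Then ‖y‖² ≥ −σ² ln(5ᾱ). -/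
open Real

lemma log_ge_one_sub_inv {x : ℝ} (hx : 0 < x) : 1 - x⁻¹ ≤ Real.log x := by
  have h := Real.log_le_sub_one_of_pos (inv_pos.mpr hx)
  rw [Real.log_inv] at h
  linarith

lemma entropy_ge {b : ℝ} (hb0 : 0 < b) (hb1 : b < 1) :
    b * Real.log b + (1 - b) * Real.log (1 - b) ≥ -Real.log 2 := by
  have h1b : 0 < 1 - b := by linarith
  have h1 := log_ge_one_sub_inv (x := 2 * b) (by linarith)
  have h2 := log_ge_one_sub_inv (x := 2 * (1 - b)) (by linarith)
  have e1 : Real.log (2 * b) = Real.log 2 + Real.log b :=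
    Real.log_mul (by norm_num) (ne_of_gt hb0)
  have e2 : Real.log (2 * (1 - b)) = Real.log 2 + Real.log (1 - b) :=
    Real.log_mul (by norm_num) (ne_of_gt h1b)
  rw [e1] at h1; rw [e2] at h2
  have i1 : (2 * b)⁻¹ = 1 / (2 * b) := by ring
  have i2 : (2 * (1 - b))⁻¹ = 1 / (2 * (1 - b)) := by ring
  rw [i1] at h1; rw [i2] at h2
  have m1 : b * (1 - 1 / (2 * b)) ≤ b * (Real.log 2 + Real.log b) :=
    mul_le_mul_of_nonneg_left h1 (le_of_lt hb0)
  have m2 : (1 - b) * (1 - 1 / (2 * (1 - b))) ≤ (1 - b) * (Real.log 2 + Real.log (1 - b)) :=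
    mul_le_mul_of_nonneg_left h2 (le_of_lt h1b)
  have c1 : b * (1 - 1 / (2 * b)) = b - 1 / 2 := by field_simp
  have c2 : (1 - b) * (1 - 1 / (2 * (1 - b))) = (1 - b) - 1 / 2 := by field_simp
  rw [c1] at m1; rw [c2] at m2
  nlinarith

theorem kl_lower_bound_norm (m : ℕ) (α' β' σ : ℝ) (y : EuclideanSpace ℝ (Fin m))
    (hα0 : 0 < α') (hα1 : α' < 1) (hβ0 : 0 < β') (hβ1 : β' < 1) (hβ : 1 / 2 ≤ β')
    (hσ : 0 < σ)
    (hKL : ‖y‖ ^ 2 / (2 * σ ^ 2) ≥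
      -β' * Real.log (α' / β') - (1 - β') * Real.log ((1 - α') / (1 - β'))) :
    ‖y‖ ^ 2 ≥ -σ ^ 2 * Real.log (5 * α') := by
  have h1a : 0 < 1 - α' := by linarith
  have h1b : 0 < 1 - β' := by linarith
  have hσ2 : 0 < σ ^ 2 := by positivity
  -- rewrite the KL expression
  have e1 : Real.log (α' / β') = Real.log α' - Real.log β' :=
    Real.log_div (ne_of_gt hα0) (ne_of_gt hβ0)
  have e2 : Real.log ((1 - α') / (1 - β')) = Real.log (1 - α') - Real.log (1 - β') :=
    Real.log_div (ne_of_gt h1a) (ne_of_gt h1b)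
  rw [e1, e2] at hKL
  have hent := entropy_ge hβ0 hβ1
  -- log α' < 0, log (1-α') < 0
  have hlα : Real.log α' < 0 := Real.log_neg hα0 hα1
  have hl1α : Real.log (1 - α') < 0 := Real.log_neg h1a (by linarith)
  -- -β' log α' ≥ -(1/2) log α'
  have hb1 : -β' * Real.log α' ≥ -(1/2) * Real.log α' := by nlinarith
  have hb2 : -(1 - β') * Real.log (1 - α') ≥ 0 := by nlinarith
  -- KL ≥ -log 2 - (1/2) log α'
  have hkl2 : ‖y‖ ^ 2 / (2 * σ ^ 2) ≥ -Real.log 2 - (1/2) * Real.log α' := by nlinarith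
  -- log (5α') ≥ log (4α') = 2 log 2 + log α'
  have hlog4 : Real.log (4 * α') = 2 * Real.log 2 + Real.log α' := by
    rw [Real.log_mul (by norm_num) (ne_of_gt hα0), show (4:ℝ) = 2^2 by norm_num,
      Real.log_pow]
    push_cast; ring
  have hmono : Real.log (4 * α') ≤ Real.log (5 * α') :=
    Real.log_le_log (by positivity) (by linarith)
  have key : ‖y‖ ^ 2 / (2 * σ ^ 2) ≥ -(1/2) * Real.log (5 * α') := by
    rw [hlog4] at hmono; nlinarith
  have hfin := (le_div_iff₀ (by positivity : (0:ℝ) < 2 * σ ^ 2)).mp key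
  nlinarith [hfin]
end

section
/- Let v ∈ ℝ^L, let v* = v + ξ for some ξ ∈ ℝ^L, let λ ≥ 0, and define v̂ componentwise by v̂_i = thresh_λ(v*_i). Then for any 1 ≤ q < ∞ and any 0 < p ≤ q: ‖v − v̂‖*_q ≤ 3(‖min{|v|, λ}‖*_q + ‖ξ_λ‖*_q) ≤ 3((‖v‖*_p)^{p/q} λ^{1−p/q} + ‖ξ_λ‖*_q), where min{|v|, λ} is taken componentwise and (ξ_λ)_i = thresh_{λ/2}(ξ_i). -/
open Real Finset

/-- The weighted `ℓ_q` norm `‖v‖*_q = (L⁻¹ ∑ |v i|^q)^(1/q)` on `ℝ^L`. -/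
noncomputable def wnorm (L : ℕ) (q : ℝ) (v : Fin L → ℝ) : ℝ :=
  ((L : ℝ)⁻¹ * ∑ i, |v i| ^ q) ^ (1 / q)

lemma pointwise_bound (lam v ξ : ℝ) (hlam : 0 ≤ lam) :
    |v - thresh lam (v + ξ)| ≤ 3 * (min |v| lam + |thresh (lam / 2) ξ|) := by
  have hmin : 0 ≤ min |v| lam := le_min (abs_nonneg v) hlam
  have hv1 : |v| ≤ |v + ξ| + |ξ| := by
    have := abs_add_le (v + ξ) (-ξ); simpa using this
  have hv2 : |v + ξ| ≤ |v| + |ξ| := abs_add_le v ξ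
  unfold thresh
  split_ifs with h1 h2 h2
  · have : v - (v + ξ) = -ξ := by ring
    rw [this, abs_neg]
    have := abs_nonneg ξ
    linarith
  · push_neg at h2
    have : v - (v + ξ) = -ξ := by ring
    rw [this, abs_neg, abs_zero]
    have hm : lam / 2 ≤ min |v| lam := le_min (by linarith) (by linarith)
    linarith
  · rw [sub_zero]
    linarith
  · push_neg at h1 h2
    rw [sub_zero, abs_zero]
    rcases le_total |v| lam with h | h
    · have : min |v| lam = |v| := min_eq_left h
      rw [this]; have := abs_nonneg v; linarith
    · have : min |v| lam = lam := min_eq_right h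
      rw [this]; have := abs_nonneg ξ; linarith

lemma wnorm_nonneg (L : ℕ) (q : ℝ) (u : Fin L → ℝ) : 0 ≤ wnorm L q u := by
  unfold wnorm
  apply Real.rpow_nonneg
  have : (0:ℝ) ≤ ∑ i, |u i| ^ q :=
    Finset.sum_nonneg fun i _ => Real.rpow_nonneg (abs_nonneg _) q
  positivity

lemma wnorm_mono (L : ℕ) (q : ℝ) (hq : 0 < q) (u w : Fin L → ℝ)
    (h : ∀ i, |u i| ≤ |w i|) : wnorm L q u ≤ wnorm L q w := by
  unfold wnorm
  have h1 : (0:ℝ) ≤ ∑ i, |u i| ^ q :=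
    Finset.sum_nonneg fun i _ => Real.rpow_nonneg (abs_nonneg _) q
  apply Real.rpow_le_rpow (by positivity)
  · apply mul_le_mul_of_nonneg_left ?_ (by positivity)
    exact Finset.sum_le_sum fun i _ =>
      Real.rpow_le_rpow (abs_nonneg _) (h i) hq.le
  · positivity

lemma wnorm_abs (L : ℕ) (q : ℝ) (u : Fin L → ℝ) :
    wnorm L q (fun i => |u i|) = wnorm L q u := by
  unfold wnorm; simp [abs_abs]

lemma wnorm_smul (L : ℕ) (q : ℝ) (hq : 0 < q) (c : ℝ) (hc : 0 ≤ c) (u : Fin L → ℝ) :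
    wnorm L q (fun i => c * u i) = c * wnorm L q u := by
  unfold wnorm
  have h1 : ∀ i : Fin L, |c * u i| ^ q = c ^ q * |u i| ^ q := fun i => by
    rw [abs_mul, abs_of_nonneg hc, Real.mul_rpow hc (abs_nonneg _)]
  simp_rw [h1, ← Finset.mul_sum]
  have hS : (0:ℝ) ≤ ∑ i, |u i| ^ q :=
    Finset.sum_nonneg fun i _ => Real.rpow_nonneg (abs_nonneg _) q
  have hL : (0:ℝ) ≤ (L:ℝ)⁻¹ := by positivity
  rw [show (L:ℝ)⁻¹ * (c ^ q * ∑ i, |u i| ^ q) = c ^ q * ((L:ℝ)⁻¹ * ∑ i, |u i| ^ q) by ring,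
    Real.mul_rpow (Real.rpow_nonneg hc q) (by positivity),
    ← Real.rpow_mul hc, mul_one_div, div_self hq.ne', Real.rpow_one]

lemma wnorm_add_le (L : ℕ) (q : ℝ) (hq : 1 ≤ q) (u w : Fin L → ℝ) :
    wnorm L q (fun i => u i + w i) ≤ wnorm L q u + wnorm L q w := by
  unfold wnorm
  have hL : (0:ℝ) ≤ (L:ℝ)⁻¹ := by positivity
  have hs : ∀ x : Fin L → ℝ, (0:ℝ) ≤ ∑ i, |x i| ^ q := fun x =>
    Finset.sum_nonneg fun i _ => Real.rpow_nonneg (abs_nonneg _) q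
  rw [Real.mul_rpow hL (hs _), Real.mul_rpow hL (hs _), Real.mul_rpow hL (hs _), ← mul_add]
  exact mul_le_mul_of_nonneg_left (Real.Lp_add_le Finset.univ u w hq)
    (Real.rpow_nonneg hL _)

theorem thresholded_vector_error_bound (L : ℕ) (hL : 0 < L) (v ξ : Fin L → ℝ)
    (lam : ℝ) (hlam : 0 ≤ lam) (q p : ℝ) (hq : 1 ≤ q) (hp : 0 < p) (hpq : p ≤ q) :
    wnorm L q (fun i => v i - thresh lam (v i + ξ i)) ≤
      3 * (wnorm L q (fun i => min |v i| lam) + wnorm L q (fun i => thresh (lam / 2) (ξ i))) ∧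
    3 * (wnorm L q (fun i => min |v i| lam) + wnorm L q (fun i => thresh (lam / 2) (ξ i))) ≤
      3 * ((wnorm L p v) ^ (p / q) * lam ^ (1 - p / q) +
        wnorm L q (fun i => thresh (lam / 2) (ξ i))) := by
  have hq0 : 0 < q := lt_of_lt_of_le one_pos hq
  constructor
  · -- part 1
    have hpt : ∀ i : Fin L, |v i - thresh lam (v i + ξ i)| ≤
        |3 * (min |v i| lam + |thresh (lam / 2) (ξ i)|)| := by
      intro i
      have h := pointwise_bound lam (v i) (ξ i) hlam
      have hnn : 0 ≤ 3 * (min |v i| lam + |thresh (lam / 2) (ξ i)|) := by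
        have := le_min (abs_nonneg (v i)) hlam
        have := abs_nonneg (thresh (lam / 2) (ξ i))
        linarith
      rw [abs_of_nonneg hnn]; exact h
    calc wnorm L q (fun i => v i - thresh lam (v i + ξ i))
        ≤ wnorm L q (fun i => 3 * (min |v i| lam + |thresh (lam / 2) (ξ i)|)) :=
          wnorm_mono L q hq0 _ _ hpt
      _ = 3 * wnorm L q (fun i => min |v i| lam + |thresh (lam / 2) (ξ i)|) :=
          wnorm_smul L q hq0 3 (by norm_num) _
      _ ≤ 3 * (wnorm L q (fun i => min |v i| lam) +
            wnorm L q (fun i => |thresh (lam / 2) (ξ i)|)) := by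
          have := wnorm_add_le L q hq (fun i => min |v i| lam)
            (fun i => |thresh (lam / 2) (ξ i)|)
          linarith
      _ = 3 * (wnorm L q (fun i => min |v i| lam) +
            wnorm L q (fun i => thresh (lam / 2) (ξ i))) := by
          rw [wnorm_abs]
  · -- part 2
    have key : wnorm L q (fun i => min |v i| lam) ≤
        (wnorm L p v) ^ (p / q) * lam ^ (1 - p / q) := by
      have hkey : ∀ i : Fin L, |min |v i| lam| ^ q ≤ |v i| ^ p * lam ^ (q - p) := by
        intro i
        have hm0 : 0 ≤ min |v i| lam := le_min (abs_nonneg _) hlam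
        rw [abs_of_nonneg hm0]
        have e : p + (q - p) = q := by ring
        have hsplit : min |v i| lam ^ q = min |v i| lam ^ p * min |v i| lam ^ (q - p) := by
          have h := Real.rpow_add' hm0 (show p + (q - p) ≠ 0 by rw [e]; exact hq0.ne')
          rw [e] at h; exact h
        rw [hsplit]
        apply mul_le_mul
        · exact Real.rpow_le_rpow hm0 (min_le_left _ _) hp.le
        · exact Real.rpow_le_rpow hm0 (min_le_right _ _) (by linarith)
        · exact Real.rpow_nonneg hm0 _
        · exact Real.rpow_nonneg (abs_nonneg _) _
      unfold wnorm
      have hL : (0:ℝ) ≤ (L:ℝ)⁻¹ := by positivity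
      have hSp : (0:ℝ) ≤ ∑ i, |v i| ^ p :=
        Finset.sum_nonneg fun i _ => Real.rpow_nonneg (abs_nonneg _) p
      have hsum : (L:ℝ)⁻¹ * ∑ i, |min |v i| lam| ^ q ≤
          ((L:ℝ)⁻¹ * ∑ i, |v i| ^ p) * lam ^ (q - p) := by
        have : ∑ i, |min |v i| lam| ^ q ≤ ∑ i, |v i| ^ p * lam ^ (q - p) :=
          Finset.sum_le_sum fun i _ => hkey i
        rw [← Finset.sum_mul] at this
        calc (L:ℝ)⁻¹ * ∑ i, |min |v i| lam| ^ q
            ≤ (L:ℝ)⁻¹ * ((∑ i, |v i| ^ p) * lam ^ (q - p)) :=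
              mul_le_mul_of_nonneg_left this hL
          _ = ((L:ℝ)⁻¹ * ∑ i, |v i| ^ p) * lam ^ (q - p) := by ring
      have hsq : (0:ℝ) ≤ ∑ i, |min |v i| lam| ^ q :=
        Finset.sum_nonneg fun i _ => Real.rpow_nonneg (abs_nonneg _) q
      calc ((L:ℝ)⁻¹ * ∑ i, |min |v i| lam| ^ q) ^ (1 / q)
          ≤ (((L:ℝ)⁻¹ * ∑ i, |v i| ^ p) * lam ^ (q - p)) ^ (1 / q) := by
            apply Real.rpow_le_rpow (by positivity) hsum (by positivity)
        _ = (((L:ℝ)⁻¹ * ∑ i, |v i| ^ p) ^ (1 / p)) ^ (p / q) * lam ^ (1 - p / q) := by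
            have hX : (0:ℝ) ≤ (L:ℝ)⁻¹ * ∑ i, |v i| ^ p := by positivity
            rw [Real.mul_rpow (by positivity) (Real.rpow_nonneg hlam _),
              ← Real.rpow_mul hX, ← Real.rpow_mul hlam,
              show 1 / p * (p / q) = 1 / q by field_simp,
              show (q - p) * (1 / q) = 1 - p / q by field_simp]
    have hξ := wnorm_nonneg L q (fun i => thresh (lam / 2) (ξ i))
    linarith
end

section
/- Let ξ ∈ ℝ^L have components each mean-zero Gaussian with variance at most σ̃². Then for any threshold λ ≥ 0, any 1 ≤ q < ∞, and any T > 0, setting b = max{λ/2, 2^{−1/q} T}, one has P(‖ξ_λ‖*_q ≥ T) ≤ C(q) · T^{−q} σ̃^q e^{−b²/(4σ̃²)}, where C(q) depends only on q. -/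
open Real MeasureTheory ProbabilityTheory

noncomputable def tailC (q : ℝ) : ℝ := (Nat.factorial (Nat.ceil q) : ℝ) * 8 ^ (Nat.ceil q) + 1

lemma one_le_tailC (q : ℝ) : 1 ≤ tailC q := by
  have h1 : (1:ℝ) ≤ (Nat.factorial (Nat.ceil q) : ℝ) := by exact_mod_cast Nat.one_le_iff_ne_zero.mpr (Nat.factorial_pos (Nat.ceil q)).ne'
  have h2 : (1:ℝ) ≤ 8 ^ (Nat.ceil q) := one_le_pow₀ (by norm_num)
  unfold tailC; nlinarith

lemma rpow_le_tailC_mul_exp (q : ℝ) (hq : 1 ≤ q) {t : ℝ} (ht : 0 ≤ t) :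
    t ^ q ≤ tailC q * Real.exp (t ^ 2 / 8) := by
  have hexp1 : (1:ℝ) ≤ Real.exp (t ^ 2 / 8) := by
    rw [Real.one_le_exp_iff]; positivity
  have hC := one_le_tailC q
  rcases le_or_gt t 1 with h1 | h1
  · have : t ^ q ≤ 1 := Real.rpow_le_one ht h1 (by linarith)
    nlinarith
  · set n := Nat.ceil q with hn
    have h2 : t ^ q ≤ t ^ (n : ℝ) :=
      Real.rpow_le_rpow_of_exponent_le h1.le (Nat.le_ceil q)
    rw [Real.rpow_natCast] at h2
    have h3 : t ^ n ≤ (t ^ 2) ^ n := by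
      rw [← pow_mul]
      exact pow_le_pow_right₀ h1.le (by omega)
    have h4 : (t ^ 2 / 8) ^ n / (Nat.factorial n : ℝ) ≤ Real.exp (t ^ 2 / 8) :=
      Real.pow_div_factorial_le_exp (x := t^2/8) (by positivity) n
    have h5 : (t ^ 2) ^ n = 8 ^ n * ((t ^ 2 / 8) ^ n) := by
      rw [div_pow]; field_simp
    have hfac : (0:ℝ) < (Nat.factorial n : ℝ) := by exact_mod_cast Nat.factorial_pos n
    have h6 : (t^2/8)^n ≤ (Nat.factorial n : ℝ) * Real.exp (t^2/8) := by
      rw [div_le_iff₀ hfac] at h4; linarith [h4]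
    have h8 : (0:ℝ) < 8 ^ n := by positivity
    calc t ^ q ≤ (t ^ 2) ^ n := le_trans h2 h3
      _ = 8 ^ n * ((t ^ 2 / 8) ^ n) := h5
      _ ≤ 8 ^ n * ((Nat.factorial n : ℝ) * Real.exp (t^2/8)) := by nlinarith
      _ = ((Nat.factorial n : ℝ) * 8 ^ n) * Real.exp (t^2/8) := by ring
      _ ≤ tailC q * Real.exp (t^2/8) := by
          unfold tailC; rw [hn] at *; nlinarith

lemma coord_bound (q : ℝ) (hq : 1 ≤ q) (σ : ℝ) (hσ : 0 < σ) (v : NNReal)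
    (hv : (v : ℝ) ≤ σ ^ 2) {b : ℝ} (hb : 0 < b) :
    ∫⁻ x, ENNReal.ofReal (if b ≤ |x| then |x| ^ q else 0) ∂(gaussianReal 0 v) ≤
      ENNReal.ofReal (2 * tailC q * σ ^ q * Real.exp (-b ^ 2 / (4 * σ ^ 2))) := by
  have hq0 : q ≠ 0 := by linarith
  have hgmeas : Measurable fun x : ℝ => ENNReal.ofReal (if b ≤ |x| then |x| ^ q else 0) := by
    apply ENNReal.measurable_ofReal.comp
    exact Measurable.ite (measurableSet_le measurable_const measurable_abs)
      ((Real.continuous_rpow_const (by linarith)).comp continuous_abs).measurable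
      measurable_const
  rcases eq_or_ne v 0 with hv0 | hv0
  · rw [hv0, gaussianReal_zero_var, lintegral_dirac' _ hgmeas]
    simp [hb.not_ge]
  · rw [gaussianReal_of_var_ne_zero _ hv0,
      lintegral_withDensity_eq_lintegral_mul _ (measurable_gaussianPDF _ _) hgmeas]
    have hvpos : (0:ℝ) < (v : ℝ) := by
      exact_mod_cast pos_iff_ne_zero.mpr hv0
    set A := tailC q * σ ^ q * Real.exp (-b ^ 2 / (4 * σ ^ 2)) with hA
    have hsq : (0:ℝ) < Real.sqrt (2 * π * v) := Real.sqrt_pos.mpr (by positivity)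
    have hA0 : 0 ≤ A := by
      rw [hA]
      have := one_le_tailC q
      have := Real.rpow_nonneg hσ.le q
      positivity
    have key : ∀ x : ℝ, gaussianPDF 0 v x * ENNReal.ofReal (if b ≤ |x| then |x| ^ q else 0) ≤
        ENNReal.ofReal (A * ((Real.sqrt (2 * π * v))⁻¹ *
          Real.exp (-(1 / (8 * (v:ℝ))) * x ^ 2))) := by
      intro x
      rw [gaussianPDF, ← ENNReal.ofReal_mul (gaussianPDFReal_nonneg _ _ _)]
      apply ENNReal.ofReal_le_ofReal
      by_cases hbx : b ≤ |x|
      · rw [if_pos hbx]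
        have hx2 : b ^ 2 ≤ x ^ 2 := by
          rw [← sq_abs x]; exact pow_le_pow_left₀ hb.le hbx 2
        have h1 : |x| ^ q ≤ tailC q * σ ^ q * Real.exp (x ^ 2 / (8 * σ ^ 2)) := by
          have ht := rpow_le_tailC_mul_exp q hq (t := |x| / σ) (by positivity)
          have habs : |x| ^ q = σ ^ q * (|x| / σ) ^ q := by
            rw [← Real.mul_rpow hσ.le (by positivity)]
            rw [mul_div_cancel₀ _ hσ.ne']
          have h2 : (|x| / σ) ^ 2 / 8 = x ^ 2 / (8 * σ ^ 2) := by
            rw [div_pow, sq_abs]; ring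
          rw [h2] at ht
          calc |x| ^ q = σ ^ q * (|x| / σ) ^ q := habs
            _ ≤ σ ^ q * (tailC q * Real.exp (x ^ 2 / (8 * σ ^ 2))) :=
                mul_le_mul_of_nonneg_left ht (Real.rpow_nonneg hσ.le q)
            _ = tailC q * σ ^ q * Real.exp (x ^ 2 / (8 * σ ^ 2)) := by ring
        have hone : (1:ℝ) ≤ Real.exp ((x ^ 2 - b ^ 2) / (4 * σ ^ 2)) :=
          Real.one_le_exp (div_nonneg (by linarith) (by positivity))
        have hexps : Real.exp (-(x - 0) ^ 2 / (2 * (v:ℝ))) *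
            (Real.exp (x ^ 2 / (8 * σ ^ 2)) * Real.exp ((x ^ 2 - b ^ 2) / (4 * σ ^ 2))) ≤
            Real.exp (-b ^ 2 / (4 * σ ^ 2)) * Real.exp (-(1 / (8 * (v:ℝ))) * x ^ 2) := by
          rw [← Real.exp_add, ← Real.exp_add, ← Real.exp_add]
          apply Real.exp_le_exp.mpr
          have hd : x ^ 2 / σ ^ 2 ≤ x ^ 2 / (v:ℝ) :=
            div_le_div_of_nonneg_left (by positivity) hvpos hv
          have e1 : -(x - 0) ^ 2 / (2 * (v:ℝ)) = -(x ^ 2 / (v:ℝ)) / 2 := by ring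
          have e2 : x ^ 2 / (8 * σ ^ 2) = (x ^ 2 / σ ^ 2) / 8 := by ring
          have e3 : (x ^ 2 - b ^ 2) / (4 * σ ^ 2)
              = (x ^ 2 / σ ^ 2) / 4 - b ^ 2 / (4 * σ ^ 2) := by ring
          have e4 : -(1 / (8 * (v:ℝ))) * x ^ 2 = -(x ^ 2 / (v:ℝ)) / 8 := by ring
          rw [e1, e2, e3, e4]
          ring_nf
          ring_nf at hd
          linarith
        have hP : (0:ℝ) ≤ (Real.sqrt (2 * π * v))⁻¹ := by positivity
        calc gaussianPDFReal 0 v x * |x| ^ q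
            = (Real.sqrt (2 * π * v))⁻¹ * Real.exp (-(x - 0) ^ 2 / (2 * (v:ℝ))) * |x| ^ q := rfl
          _ ≤ (Real.sqrt (2 * π * v))⁻¹ * Real.exp (-(x - 0) ^ 2 / (2 * (v:ℝ))) *
              (tailC q * σ ^ q * Real.exp (x ^ 2 / (8 * σ ^ 2)) *
                Real.exp ((x ^ 2 - b ^ 2) / (4 * σ ^ 2))) := by
              apply mul_le_mul_of_nonneg_left _
                (mul_nonneg (inv_nonneg.mpr (Real.sqrt_nonneg _)) (Real.exp_pos _).le)
              nlinarith [Real.exp_pos (x ^ 2 / (8 * σ ^ 2)), one_le_tailC q,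
                Real.rpow_nonneg hσ.le q, Real.rpow_nonneg (abs_nonneg x) q]
          _ = (tailC q * σ ^ q) * ((Real.sqrt (2 * π * v))⁻¹ *
              (Real.exp (-(x - 0) ^ 2 / (2 * (v:ℝ))) *
                (Real.exp (x ^ 2 / (8 * σ ^ 2)) * Real.exp ((x ^ 2 - b ^ 2) / (4 * σ ^ 2))))) := by
              ring
          _ ≤ (tailC q * σ ^ q) * ((Real.sqrt (2 * π * v))⁻¹ *
              (Real.exp (-b ^ 2 / (4 * σ ^ 2)) * Real.exp (-(1 / (8 * (v:ℝ))) * x ^ 2))) := by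
              apply mul_le_mul_of_nonneg_left _
                (mul_nonneg (by linarith [one_le_tailC q]) (Real.rpow_nonneg hσ.le q))
              exact mul_le_mul_of_nonneg_left hexps hP
          _ = A * ((Real.sqrt (2 * π * v))⁻¹ * Real.exp (-(1 / (8 * (v:ℝ))) * x ^ 2)) := by
              rw [hA]; ring
      · rw [if_neg hbx, mul_zero]
        positivity
    have h8v : (0:ℝ) < 1 / (8 * (v:ℝ)) := by positivity
    have hint : Integrable (fun x : ℝ => A * ((Real.sqrt (2 * π * v))⁻¹ *
        Real.exp (-(1 / (8 * (v:ℝ))) * x ^ 2))) := by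
      exact ((integrable_exp_neg_mul_sq h8v).const_mul _).const_mul _
    calc ∫⁻ x, gaussianPDF 0 v x * ENNReal.ofReal (if b ≤ |x| then |x| ^ q else 0)
        ≤ ∫⁻ x, ENNReal.ofReal (A * ((Real.sqrt (2 * π * v))⁻¹ *
            Real.exp (-(1 / (8 * (v:ℝ))) * x ^ 2))) := lintegral_mono key
      _ = ENNReal.ofReal (∫ x, A * ((Real.sqrt (2 * π * v))⁻¹ *
            Real.exp (-(1 / (8 * (v:ℝ))) * x ^ 2))) := by
          rw [ofReal_integral_eq_lintegral_ofReal hint]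
          exact Filter.Eventually.of_forall fun x => by positivity
      _ ≤ ENNReal.ofReal (2 * tailC q * σ ^ q * Real.exp (-b ^ 2 / (4 * σ ^ 2))) := by
          apply ENNReal.ofReal_le_ofReal
          rw [integral_const_mul, integral_const_mul, integral_gaussian]
          have hπ : π / (1 / (8 * (v:ℝ))) = (2 * Real.sqrt (2 * π * (v:ℝ))) ^ 2 := by
            rw [mul_pow, Real.sq_sqrt (by positivity)]
            field_simp; ring
          rw [hπ, Real.sqrt_sq (by positivity)]
          have h2 : (Real.sqrt (2 * π * (v:ℝ)))⁻¹ * (2 * Real.sqrt (2 * π * (v:ℝ))) = 2 := by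
            field_simp
          rw [h2, hA]
          exact le_of_eq (by ring)

theorem thresholded_noise_tail_bound_explicit (q : ℝ) (hq : 1 ≤ q) :
    ∃ C : ℝ, 0 < C ∧
      ∀ (Ω : Type) (_ : MeasureSpace Ω) (_ : IsProbabilityMeasure (ℙ : Measure Ω))
        (L : ℕ) (_ : 0 < L) (ξ : Ω → Fin L → ℝ) (σ' : ℝ) (_ : 0 < σ')
        (_ : ∀ i : Fin L, ∃ v : NNReal, (v : ℝ) ≤ σ' ^ 2 ∧
          Measure.map (fun ω => ξ ω i) ℙ = gaussianReal 0 v)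
        (lam T : ℝ) (_ : 0 ≤ lam) (_ : 0 < T),
        ℙ {ω | T ≤ wnorm L q (fun i => if |ξ ω i| ≥ lam / 2 then ξ ω i else 0)} ≤
          ENNReal.ofReal (C * T ^ (-q) * σ' ^ q *
            Real.exp (-(max (lam / 2) ((2 : ℝ) ^ (-1 / q) * T)) ^ 2 / (4 * σ' ^ 2))) := by
  refine ⟨4 * tailC q, by linarith [one_le_tailC q], ?_⟩
  intro Ω _ _ L hL ξ σ' hσ hξ lam T hlam hT
  have hqpos : 0 < q := by linarith
  have hq0 : q ≠ 0 := hqpos.ne'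
  set b : ℝ := max (lam / 2) ((2 : ℝ) ^ (-1 / q) * T) with hbdef
  have hb : 0 < b :=
    lt_of_lt_of_le (mul_pos (Real.rpow_pos_of_pos two_pos _) hT) (le_max_right _ _)
  set g : ℝ → ℝ := fun x => if b ≤ |x| then |x| ^ q else 0 with hgdef
  have hg_meas : Measurable g :=
    Measurable.ite (measurableSet_le measurable_const measurable_abs)
      ((Real.continuous_rpow_const (by linarith)).comp continuous_abs).measurable
      measurable_const
  have hg_nonneg : ∀ x, 0 ≤ g x := by
    intro x; rw [hgdef]; dsimp only
    split
    · exact Real.rpow_nonneg (abs_nonneg x) q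
    · exact le_refl 0
  -- coordinates are AEMeasurable
  have hcoord : ∀ i : Fin L, AEMeasurable (fun ω => ξ ω i) ℙ := by
    intro i
    obtain ⟨v, _, hmap⟩ := hξ i
    by_contra h
    rw [Measure.map_of_not_aemeasurable h] at hmap
    have h1 : (gaussianReal 0 v) Set.univ = 1 := measure_univ
    rw [← hmap] at h1
    simp at h1
  set G : Ω → ENNReal := fun ω => ∑ i, ENNReal.ofReal (g (ξ ω i)) with hGdef
  have hGae : AEMeasurable G ℙ :=
    Finset.aemeasurable_fun_sum _ fun i _ =>
      (ENNReal.measurable_ofReal.comp hg_meas).comp_aemeasurable (hcoord i)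
  have hTq : (0:ℝ) < T ^ q := Real.rpow_pos_of_pos hT q
  have hLT : (0:ℝ) < (L : ℝ) * T ^ q / 2 := by
    have : (0:ℝ) < (L:ℝ) := by exact_mod_cast hL
    positivity
  -- event inclusion
  have hsub : {ω | T ≤ wnorm L q (fun i => if |ξ ω i| ≥ lam / 2 then ξ ω i else 0)} ⊆
      {ω | ENNReal.ofReal ((L : ℝ) * T ^ q / 2) ≤ G ω} := by
    intro ω hw
    simp only [Set.mem_setOf_eq] at hw ⊢
    set f : ℝ → ℝ := fun x => if lam / 2 ≤ |x| then |x| ^ q else 0 with hfdef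
    have hf_nonneg : ∀ x, 0 ≤ f x := by
      intro x; rw [hfdef]; dsimp only
      split
      · exact Real.rpow_nonneg (abs_nonneg x) q
      · exact le_refl 0
    have hrw : ∀ x : ℝ, |if |x| ≥ lam / 2 then x else 0| ^ q = f x := by
      intro x
      rw [hfdef]; simp only [ge_iff_le]
      split
      · rfl
      · rw [abs_zero, Real.zero_rpow hq0]
    have hwnorm : wnorm L q (fun i => if |ξ ω i| ≥ lam / 2 then ξ ω i else 0) =
        ((L : ℝ)⁻¹ * ∑ i, f (ξ ω i)) ^ (1 / q) := by
      unfold wnorm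
      congr 1
      congr 1
      exact Finset.sum_congr rfl fun i _ => hrw (ξ ω i)
    rw [hwnorm] at hw
    have hX : (0:ℝ) ≤ (L : ℝ)⁻¹ * ∑ i, f (ξ ω i) := by
      apply mul_nonneg (by positivity)
      exact Finset.sum_nonneg fun i _ => hf_nonneg _
    have h2 : T ^ q ≤ (L : ℝ)⁻¹ * ∑ i, f (ξ ω i) := by
      have h3 := Real.rpow_le_rpow hT.le hw hqpos.le
      rwa [← Real.rpow_mul hX, one_div, inv_mul_cancel₀ hq0, Real.rpow_one] at h3
    have hLpos : (0:ℝ) < (L : ℝ) := by exact_mod_cast hL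
    have hS : (L : ℝ) * T ^ q ≤ ∑ i, f (ξ ω i) := by
      have h4 := mul_le_mul_of_nonneg_left h2 hLpos.le
      rwa [← mul_assoc, mul_inv_cancel₀ hLpos.ne', one_mul] at h4
    have hfg : ∀ x : ℝ, f x ≤ g x + T ^ q / 2 := by
      intro x
      rw [hfdef, hgdef]; dsimp only
      by_cases hbx : b ≤ |x|
      · rw [if_pos hbx]
        split
        · linarith
        · have := Real.rpow_nonneg (abs_nonneg x) q
          linarith
      · rw [if_neg hbx]
        split
        · rename_i hlx
          have hxc : |x| < (2:ℝ) ^ (-1 / q) * T := by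
            rcases lt_or_ge |x| ((2:ℝ) ^ (-1 / q) * T) with h' | h'
            · exact h'
            · exact absurd (max_le hlx h') hbx
          have h5 : |x| ^ q ≤ ((2:ℝ) ^ (-1 / q) * T) ^ q :=
            Real.rpow_le_rpow (abs_nonneg x) hxc.le hqpos.le
          have hc : ((2:ℝ) ^ (-1 / q) * T) ^ q = T ^ q / 2 := by
            rw [Real.mul_rpow (by positivity) hT.le,
              ← Real.rpow_mul (by norm_num : (0:ℝ) ≤ 2),
              show (-1 / q) * q = -1 by field_simp,
              Real.rpow_neg_one]
            ring
          rw [hc] at h5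
          linarith
        · linarith
    have hsum2 : (L : ℝ) * T ^ q / 2 ≤ ∑ i, g (ξ ω i) := by
      have hs1 : ∑ i, f (ξ ω i) ≤ (∑ i, g (ξ ω i)) + (L : ℝ) * (T ^ q / 2) := by
        calc ∑ i, f (ξ ω i) ≤ ∑ i, (g (ξ ω i) + T ^ q / 2) :=
              Finset.sum_le_sum fun i _ => hfg _
          _ = (∑ i, g (ξ ω i)) + (L : ℝ) * (T ^ q / 2) := by
              rw [Finset.sum_add_distrib, Finset.sum_const, Finset.card_univ,
                Fintype.card_fin, nsmul_eq_mul]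
      linarith
    calc ENNReal.ofReal ((L : ℝ) * T ^ q / 2)
        ≤ ENNReal.ofReal (∑ i, g (ξ ω i)) := ENNReal.ofReal_le_ofReal hsum2
      _ = G ω := ENNReal.ofReal_sum_of_nonneg fun i _ => hg_nonneg _
  -- key constant
  set K : ℝ := 2 * tailC q * σ' ^ q * Real.exp (-b ^ 2 / (4 * σ' ^ 2)) with hKdef
  have hK0 : 0 ≤ K := by
    rw [hKdef]
    have := one_le_tailC q
    have := Real.rpow_nonneg hσ.le q
    positivity
  have hint : ∫⁻ ω, G ω ∂ℙ ≤ (L : ENNReal) * ENNReal.ofReal K := by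
    rw [hGdef]
    rw [lintegral_finset_sum' (f := fun (i : Fin L) ω => ENNReal.ofReal (g (ξ ω i)))
      Finset.univ (fun i _ => by
        exact (ENNReal.measurable_ofReal.comp hg_meas).comp_aemeasurable (hcoord i))]
    have hterm : ∀ i : Fin L, ∫⁻ ω, ENNReal.ofReal (g (ξ ω i)) ∂ℙ ≤ ENNReal.ofReal K := by
      intro i
      obtain ⟨v, hvle, hmap⟩ := hξ i
      have heq : ∫⁻ ω, ENNReal.ofReal (g (ξ ω i)) ∂ℙ =
          ∫⁻ x, ENNReal.ofReal (g x) ∂(gaussianReal 0 v) := by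
        rw [← hmap,
          lintegral_map' (f := fun x => ENNReal.ofReal (g x)) (by
            exact (ENNReal.measurable_ofReal.comp hg_meas).aemeasurable) (hcoord i)]
      rw [heq, hgdef, hKdef]
      exact coord_bound q hq σ' hσ v hvle hb
    calc ∑ i, ∫⁻ ω, ENNReal.ofReal (g (ξ ω i)) ∂ℙ
        ≤ ∑ _i : Fin L, ENNReal.ofReal K := Finset.sum_le_sum fun i _ => hterm i
      _ = (L : ENNReal) * ENNReal.ofReal K := by
          rw [Finset.sum_const, Finset.card_univ, Fintype.card_fin, nsmul_eq_mul]
  have hne0 : ENNReal.ofReal ((L : ℝ) * T ^ q / 2) ≠ 0 := (ENNReal.ofReal_pos.mpr hLT).ne'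
  calc ℙ {ω | T ≤ wnorm L q (fun i => if |ξ ω i| ≥ lam / 2 then ξ ω i else 0)}
      ≤ ℙ {ω | ENNReal.ofReal ((L : ℝ) * T ^ q / 2) ≤ G ω} := measure_mono hsub
    _ ≤ (∫⁻ ω, G ω ∂ℙ) / ENNReal.ofReal ((L : ℝ) * T ^ q / 2) :=
        meas_ge_le_lintegral_div hGae hne0 ENNReal.ofReal_ne_top
    _ ≤ ((L : ENNReal) * ENNReal.ofReal K) / ENNReal.ofReal ((L : ℝ) * T ^ q / 2) :=
        ENNReal.div_le_div_right hint _
    _ ≤ ENNReal.ofReal (4 * tailC q * T ^ (-q) * σ' ^ q *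
          Real.exp (-(max (lam / 2) ((2 : ℝ) ^ (-1 / q) * T)) ^ 2 / (4 * σ' ^ 2))) := by
        rw [ENNReal.div_le_iff hne0 ENNReal.ofReal_ne_top]
        rw [← ENNReal.ofReal_natCast L, ← ENNReal.ofReal_mul (by positivity),
          ← ENNReal.ofReal_mul (by
            have h1 := one_le_tailC q
            have h2 := Real.rpow_nonneg hσ.le q
            have h3 : (0:ℝ) ≤ T ^ (-q) := Real.rpow_nonneg hT.le _
            positivity)]
        apply ENNReal.ofReal_le_ofReal
        have hTT : T ^ (-q) * T ^ q = 1 := by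
          rw [← Real.rpow_add hT]; simp
        rw [hKdef, ← hbdef]
        apply le_of_eq
        have : 4 * tailC q * T ^ (-q) * σ' ^ q * Real.exp (-b ^ 2 / (4 * σ' ^ 2)) *
            ((L : ℝ) * T ^ q / 2) =
            (L : ℝ) * (2 * tailC q * σ' ^ q * Real.exp (-b ^ 2 / (4 * σ' ^ 2))) *
              (T ^ (-q) * T ^ q) := by ring
        rw [this, hTT, mul_one]
end
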